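/- arXiv:2512.21461 — 2 statements merged into one kernel-verified Lean document; each statement's English description precedes it below -/
import Mathlib

section
/- Let Γ be a finite connected graph on vertices {1,…,n} with n ≥ 2 (no multiple edges, no loops), with intersection matrix m_{ij} = 1 if {i,j} is an edge and m_{ii} = e_i² < 0, negative definite, and let Z = Σ z_i e_i be the fundamental cycle (the minimal nonzero effective anti-nef cycle). Suppose there exist two distinct vertices i₁, i₂ with z_{i₁} = z_{i₂} = 1 such that (Z - e_i)·e_i = 1 for i ∈ {i₁, i₂} and (Z - e_i)·e_i = 2 for all i ∉ {i₁, i₂}. Then Γ is a chain (path graph) with endpoints i₁ and i₂, and Z is reduced, i.e. z_i = 1 for all i. -/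
/-
Write `s(v) = ∑_{w ∼ v} Z w`. Since `Z·e_v = Z v · e_v² + s(v)` and `Z` is anti-nef, `Z` cannot
vanish next to a positive coefficient, so `Z ≥ 1` everywhere. At a vertex with `Z v = 1` the
hypotheses say `s(v) = 1` at `i₁, i₂` and `s(v) = 2` elsewhere. Hence "`Z = 1` on `v` and on all
neighbours of `v`" holds at `i₁` and spreads along edges: a neighbour `u` of such a `v` has
`Z u = 1` and `s(u) ≤ 2`, of which `v` already contributes `1`. So `Z ≡ 1`, the degrees are
`1` at `i₁, i₂` and `2` elsewhere, and a path from `i₁` to `i₂` then already contains every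
neighbour of each of its vertices, so it is a Hamiltonian path and the graph is that chain.
-/

/-- The pairing `x·y = xᵗ M y` over `ℤ`. -/
def pairZ {n : ℕ} (M : Matrix (Fin n) (Fin n) ℤ) (x y : Fin n → ℤ) : ℤ :=
  dotProduct x (M.mulVec y)

open Finset

namespace SimpleGraph

variable {V : Type*} {G : SimpleGraph V}

theorem Reachable.of_adj_closed {P : V → Prop} (hP : ∀ ⦃x y⦄, G.Adj x y → P x → P y)
    {u v : V} (h : G.Reachable u v) (hu : P u) : P v := by
  obtain ⟨p⟩ := h
  induction p with
  | nil => exact hu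
  | cons hxy _ ih => exact ih (hP hxy hu)

namespace Walk

variable {u v : V} {p : G.Walk u v}

theorem IsPath.adj_getVert_iff (hp : p.IsPath) {i j : ℕ} (hi : i ≤ p.length) (hj : j ≤ p.length)
    (hnbr : p.toSubgraph.neighborSet (p.getVert i) = G.neighborSet (p.getVert i)) :
    G.Adj (p.getVert i) (p.getVert j) ↔ i + 1 = j ∨ j + 1 = i := by
  rw [← mem_neighborSet, ← hnbr, Subgraph.mem_neighborSet, toSubgraph_adj_iff]
  constructor
  · rintro ⟨k, hk, hklt⟩
    have hinj {l m : ℕ} (hl : l ≤ p.length) (hm : m ≤ p.length) (h : p.getVert l = p.getVert m) :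
        l = m := hp.getVert_injOn hl hm h
    rcases Sym2.eq_iff.mp hk with ⟨h₁, h₂⟩ | ⟨h₁, h₂⟩
    · have := hinj (by omega) hi h₁; have := hinj (by omega) hj h₂; omega
    · have := hinj (by omega) hj h₁; have := hinj (by omega) hi h₂; omega
  · rintro (rfl | rfl)
    · exact ⟨i, rfl, by omega⟩
    · exact ⟨j, Sym2.eq_swap, by omega⟩

variable [Fintype V] [DecidableRel G.Adj]

theorem IsPath.neighborSet_toSubgraph_eq (hp : p.IsPath) (huv : u ≠ v)
    (hu : G.degree u ≤ 1) (hv : G.degree v ≤ 1) (hdeg : ∀ w, w ≠ u → w ≠ v → G.degree w ≤ 2)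
    {x : V} (hx : x ∈ p.support) : p.toSubgraph.neighborSet x = G.neighborSet x := by
  have hnil : ¬p.Nil := fun h => huv h.eq
  refine Set.eq_of_subset_of_ncard_le (p.toSubgraph.neighborSet_subset x) ?_ (Set.toFinite _)
  rw [← coe_neighborFinset, Set.ncard_coe_finset, card_neighborFinset_eq_degree]
  obtain ⟨i, rfl, hi⟩ := mem_support_iff_exists_getVert.mp hx
  rcases Nat.eq_zero_or_pos i with rfl | hi0
  · rw [getVert_zero, hp.neighborSet_toSubgraph_startpoint hnil, Set.ncard_singleton]
    exact hu
  rcases hi.lt_or_eq with hlt | rfl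
  · rw [hp.ncard_neighborSet_toSubgraph_internal_eq_two hi0.ne' hlt]
    exact hdeg _ (by rw [Ne, hp.getVert_eq_start_iff hi]; omega)
      (by rw [Ne, hp.getVert_eq_end_iff hi]; omega)
  · rw [getVert_length, hp.neighborSet_toSubgraph_endpoint hnil, Set.ncard_singleton]
    exact hv

end Walk

variable [Fintype V] [DecidableRel G.Adj]

theorem Connected.eq_one_of_sum_neighborFinset_le (hconn : G.Connected) {Z : V → ℤ}
    (hpos : ∀ v, 1 ≤ Z v) (hle : ∀ v, Z v = 1 → ∑ w ∈ G.neighborFinset v, Z w ≤ 2)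
    {a : V} (ha : Z a = 1) (ha' : ∑ w ∈ G.neighborFinset a, Z w ≤ 1) (v : V) : Z v = 1 := by
  classical
  have hnonneg : ∀ w ∈ G.neighborFinset a, 0 ≤ Z w := fun w _ => zero_le_one.trans (hpos w)
  let P : V → Prop := fun x => Z x = 1 ∧ ∀ y, G.Adj x y → Z y = 1
  have hPa : P a := ⟨ha, fun y hy => le_antisymm
    ((single_le_sum hnonneg (mem_neighborFinset _ _ _ |>.mpr hy)).trans ha') (hpos y)⟩
  have hclosed : ∀ ⦃x y⦄, G.Adj x y → P x → P y := by
    rintro x y hxy ⟨hx, hxnbr⟩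
    have hy := hxnbr y hxy
    refine ⟨hy, fun z hyz => ?_⟩
    by_cases hzx : z = x
    · rwa [hzx]
    have hxmem : x ∈ G.neighborFinset y := (mem_neighborFinset _ _ _).mpr hxy.symm
    have hsplit := add_sum_erase _ Z hxmem
    have hz : Z z ≤ ∑ w ∈ (G.neighborFinset y).erase x, Z w :=
      single_le_sum (fun w _ => zero_le_one.trans (hpos w))
        (mem_erase.mpr ⟨hzx, (mem_neighborFinset _ _ _).mpr hyz⟩)
    have := hle y hy
    linarith [hpos z]
  exact ((hconn.preconnected a v).of_adj_closed hclosed hPa).1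

theorem Connected.exists_isHamiltonian_of_degree_le [DecidableEq V] (hconn : G.Connected)
    {a b : V} (hab : a ≠ b) (ha : G.degree a ≤ 1) (hb : G.degree b ≤ 1)
    (hdeg : ∀ w, w ≠ a → w ≠ b → G.degree w ≤ 2) :
    ∃ p : G.Walk a b, p.IsHamiltonian ∧ ∀ i j, i ≤ p.length → j ≤ p.length →
      (G.Adj (p.getVert i) (p.getVert j) ↔ i + 1 = j ∨ j + 1 = i) := by
  obtain ⟨p, hp⟩ := (hconn.preconnected a b).exists_isPath
  have hnbr {x : V} (hx : x ∈ p.support) := hp.neighborSet_toSubgraph_eq hab ha hb hdeg hx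
  have hclosed : ∀ ⦃x y⦄, G.Adj x y → x ∈ p.support → y ∈ p.support := fun x y hxy hx =>
    have hxy' : y ∈ p.toSubgraph.neighborSet x := by rw [hnbr hx]; exact hxy
    Walk.mem_support_of_adj_toSubgraph hxy'.symm
  refine ⟨p, hp.isHamiltonian_of_mem fun w =>
    (hconn.preconnected a w).of_adj_closed hclosed p.start_mem_support, fun i j hi hj => ?_⟩
  exact hp.adj_getVert_iff hi hj (hnbr (p.getVert_mem_support i))

end SimpleGraph

section IntersectionMatrix

variable {n : ℕ} {G : SimpleGraph (Fin n)} [DecidableRel G.Adj] {M : Matrix (Fin n) (Fin n) ℤ}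

theorem pairZ_single_eq (hadj : ∀ i j, i ≠ j → M i j = if G.Adj i j then 1 else 0)
    (x : Fin n → ℤ) (i : Fin n) :
    pairZ M x (Pi.single i 1) = x i * M i i + ∑ j ∈ G.neighborFinset i, x j := by
  have hoff : ∀ j ∈ univ.erase i, x j * M j i = if G.Adj i j then x j else 0 := fun j hj => by
    simp only [hadj j i (ne_of_mem_erase hj), G.adj_comm, mul_ite, mul_one, mul_zero]
  rw [pairZ, Matrix.mulVec_single_one, dotProduct, ← add_sum_erase _ _ (mem_univ i)]
  simp only [Matrix.col_apply]
  rw [sum_congr rfl hoff, ← sum_filter, G.neighborFinset_eq_filter]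
  congr 1
  refine sum_congr (ext fun j => ?_) fun _ _ => rfl
  simpa using fun h : G.Adj i j => h.ne'

theorem pairZ_sub_single_self (hadj : ∀ i j, i ≠ j → M i j = if G.Adj i j then 1 else 0)
    (x : Fin n → ℤ) (i : Fin n) :
    pairZ M (x - Pi.single i 1) (Pi.single i 1) =
      (x i - 1) * M i i + ∑ j ∈ G.neighborFinset i, x j := by
  rw [pairZ_single_eq hadj]
  refine congrArg₂ _ (by simp) (sum_congr rfl fun j hj => ?_)
  simp [((G.mem_neighborFinset i j).mp hj).ne']

theorem one_le_of_antinef (hconn : G.Connected)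
    (hadj : ∀ i j, i ≠ j → M i j = if G.Adj i j then 1 else 0) {Z : Fin n → ℤ} (hZne : Z ≠ 0)
    (hZeff : ∀ i, 0 ≤ Z i) (hZnef : ∀ i, pairZ M Z (Pi.single i 1) ≤ 0) (i : Fin n) :
    1 ≤ Z i := by
  obtain ⟨i₀, hi₀⟩ := Function.ne_iff.mp hZne
  refine (hconn.preconnected i₀ i).of_adj_closed (P := fun x => 1 ≤ Z x)
    (fun x y hxy hx => ?_) (by have := hZeff i₀; simp only [Pi.zero_apply] at hi₀; omega)
  by_contra! hy
  have hZy : Z y = 0 := le_antisymm (by omega) (hZeff y)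
  have hsum : Z x ≤ ∑ j ∈ G.neighborFinset y, Z j :=
    single_le_sum (fun j _ => hZeff j) ((G.mem_neighborFinset y x).mpr hxy.symm)
  have := hZnef y
  rw [pairZ_single_eq hadj, hZy, zero_mul, zero_add] at this
  omega

end IntersectionMatrix

/-- If the fundamental cycle `Z` of a connected negative definite weighted
graph has two distinct vertices `i₁, i₂` with coefficient `1` such that
`(Z - e_i)·e_i = 1` for `i ∈ {i₁,i₂}` and `(Z - e_i)·e_i = 2` otherwise,
then the graph is a chain with endpoints `i₁, i₂` and `Z` is reduced. -/
theorem stmt_10 {n : ℕ} (hn : 2 ≤ n) (G : SimpleGraph (Fin n))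
    [DecidableRel G.Adj] (hconn : G.Connected)
    (M : Matrix (Fin n) (Fin n) ℤ)
    (hadj : ∀ i j, i ≠ j → M i j = if G.Adj i j then 1 else 0)
    (Z : Fin n → ℤ) (hZne : Z ≠ 0) (hZeff : ∀ i, 0 ≤ Z i)
    (hZnef : ∀ i, pairZ M Z (Pi.single i 1) ≤ 0)
    (i₁ i₂ : Fin n) (hne : i₁ ≠ i₂) (hz₁ : Z i₁ = 1)
    (h1 : ∀ i, i = i₁ ∨ i = i₂ → pairZ M (Z - Pi.single i 1) (Pi.single i 1) = 1)
    (h2 : ∀ i, i ≠ i₁ → i ≠ i₂ → pairZ M (Z - Pi.single i 1) (Pi.single i 1) = 2) :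
    (∀ i, Z i = 1) ∧
    ∃ σ : Fin n ≃ Fin n, σ ⟨0, by omega⟩ = i₁ ∧ σ ⟨n - 1, by omega⟩ = i₂ ∧
      ∀ a b : Fin n, G.Adj (σ a) (σ b) ↔ ((a : ℕ) + 1 = b ∨ (b : ℕ) + 1 = a) := by
  have hsum (i) (hi : Z i = 1) :
      pairZ M (Z - Pi.single i 1) (Pi.single i 1) = ∑ j ∈ G.neighborFinset i, Z j := by
    rw [pairZ_sub_single_self hadj, hi, sub_self, zero_mul, zero_add]
  have hsum_le (i) (hi : Z i = 1) : ∑ j ∈ G.neighborFinset i, Z j ≤ 2 := by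
    rw [← hsum i hi]
    by_cases hi' : i = i₁ ∨ i = i₂
    · rw [h1 i hi']; norm_num
    · rw [h2 i (not_or.mp hi').1 (not_or.mp hi').2]
  have hone : ∀ i, Z i = 1 := hconn.eq_one_of_sum_neighborFinset_le
    (one_le_of_antinef hconn hadj hZne hZeff hZnef) hsum_le hz₁
    (by rw [← hsum i₁ hz₁, h1 i₁ (.inl rfl)])
  have hdeg (i) : (G.degree i : ℤ) = pairZ M (Z - Pi.single i 1) (Pi.single i 1) := by
    rw [hsum i (hone i), sum_congr rfl fun j _ => hone j]; simp
  obtain ⟨p, hp, hpadj⟩ := hconn.exists_isHamiltonian_of_degree_le hne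
    (by have := hdeg i₁; rw [h1 i₁ (.inl rfl)] at this; omega)
    (by have := hdeg i₂; rw [h1 i₂ (.inr rfl)] at this; omega)
    (fun i hi₁ hi₂ => by have := hdeg i; rw [h2 i hi₁ hi₂] at this; omega)
  have hlen : p.length = n - 1 := by simpa using hp.length_eq
  have hsupp : n = p.support.length := by simpa using hp.length_support.symm
  refine ⟨hone, (finCongr hsupp).trans hp.getVertEquiv, ?_, ?_, fun a b => ?_⟩
  · simp
  · simp [← hlen]
  · simpa using hpadj a b (by omega) (by omega)
end

section
/- Let M be a symmetric integer intersection matrix on indices {1,…,n}, K a rational vector with K·e_i = -e_i·e_i - 2 for all i (so that χ(e_i) = 1 for each i), and define χ(C) = -C·(C+K)/2. Let C_1 = e_{j_1}, C_i = C_{i-1} + e_{j_i} (1 < i ≤ m) be a computation sequence, meaning C_{i-1}·e_{j_i} ≥ 1 for 1 < i ≤ m. Then χ(C_m) = m - Σ_{i=2}^m C_{i-1}·e_{j_i}; consequently χ(C_m) = 1 if and only if C_{i-1}·e_{j_i} = 1 for all 1 < i ≤ m, and in all cases χ(C_m) ≤ 1. -/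
/-- The pairing `x·y = xᵗ M y` over `ℚ` with entries of `M` cast to `ℚ`. -/
def pairQ {n : ℕ} (M : Matrix (Fin n) (Fin n) ℤ) (x y : Fin n → ℚ) : ℚ :=
  dotProduct x ((M.map (Int.cast : ℤ → ℚ)).mulVec y)

/-!
Since `χ(C) = -C·(C+K)/2` is a quadratic form plus a linear term, `χ(C + D) = χ(C) + χ(D) - C·D`.
With `χ(e_i) = 1`, each step `C_i = C_{i-1} + e_{j_i}` of a computation sequence changes `χ` by
`1 - C_{i-1}·e_{j_i} ≤ 0`, which gives the formula for `χ(C_m)`; it equals `1` exactly when every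
such pairing, being at least `1`, equals `1`.
-/

section EulerCharacteristic

variable {n : ℕ} (M : Matrix (Fin n) (Fin n) ℤ)

lemma pairQ_add_left (x y z : Fin n → ℚ) : pairQ M (x + y) z = pairQ M x z + pairQ M y z :=
  add_dotProduct x y _

lemma pairQ_add_right (x y z : Fin n → ℚ) : pairQ M x (y + z) = pairQ M x y + pairQ M x z := by
  simp only [pairQ, Matrix.mulVec_add, dotProduct_add]

lemma pairQ_comm {M : Matrix (Fin n) (Fin n) ℤ} (hsym : M.IsSymm) (x y : Fin n → ℚ) :
    pairQ M x y = pairQ M y x := by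
  have hsymQ : (M.map (Int.cast : ℤ → ℚ)).IsSymm := by
    rw [Matrix.IsSymm, ← Matrix.transpose_map, hsym]
  rw [pairQ, pairQ, Matrix.dotProduct_mulVec, ← Matrix.mulVec_transpose, hsymQ, dotProduct_comm]

lemma pairQ_intCast (x y : Fin n → ℤ) :
    pairQ M (fun k => (x k : ℚ)) (fun k => (y k : ℚ)) = pairZ M x y := by
  simp [pairQ, pairZ, dotProduct, Matrix.mulVec, Finset.mul_sum]

lemma intCast_single (i : Fin n) :
    (fun k => ((Pi.single i 1 : Fin n → ℤ) k : ℚ)) = Pi.single i 1 := by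
  funext k
  by_cases h : k = i <;> simp [h]

def eulerChar (K : Fin n → ℚ) (D : Fin n → ℤ) : ℚ :=
  -(pairQ M (fun k => (D k : ℚ)) ((fun k => (D k : ℚ)) + K)) / 2

variable {M}

lemma eulerChar_add (hsym : M.IsSymm) (K : Fin n → ℚ) (D E : Fin n → ℤ) :
    eulerChar M K (D + E) = eulerChar M K D + eulerChar M K E - pairZ M D E := by
  have hcast : (fun k => ((D + E) k : ℚ)) = (fun k => (D k : ℚ)) + fun k => (E k : ℚ) := by
    funext k
    push_cast [Pi.add_apply]
    rfl
  simp only [eulerChar, hcast, pairQ_add_left, pairQ_add_right,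
    pairQ_comm hsym (fun k => (E k : ℚ)) (fun k => (D k : ℚ)), pairQ_intCast]
  ring

lemma eulerChar_single (hsym : M.IsSymm) {K : Fin n → ℚ}
    (hK : ∀ i, pairQ M K (Pi.single i 1) = -pairQ M (Pi.single i 1) (Pi.single i 1) - 2)
    (i : Fin n) : eulerChar M K (Pi.single i 1) = 1 := by
  rw [eulerChar, intCast_single, pairQ_add_right, pairQ_comm hsym _ K, hK]
  ring

lemma eulerChar_computationSequence (hsym : M.IsSymm) {K : Fin n → ℚ}
    (hK : ∀ i, pairQ M K (Pi.single i 1) = -pairQ M (Pi.single i 1) (Pi.single i 1) - 2)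
    {m : ℕ} {j : ℕ → Fin n} {C : ℕ → Fin n → ℤ} (hC0 : C 0 = Pi.single (j 0) 1)
    (hCs : ∀ i : ℕ, i + 1 < m → C (i + 1) = C i + Pi.single (j (i + 1)) 1) :
    ∀ t < m, eulerChar M K (C t) =
      (t + 1 : ℚ) - ∑ i ∈ Finset.range t, (pairZ M (C i) (Pi.single (j (i + 1)) 1) : ℚ)
  | 0, _ => by simp [hC0, eulerChar_single hsym hK]
  | t + 1, ht => by
    rw [hCs t ht, eulerChar_add hsym, eulerChar_single hsym hK,
      eulerChar_computationSequence hsym hK hC0 hCs t (by omega), Finset.sum_range_succ]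
    push_cast
    ring

end EulerCharacteristic

/-- Artin's rationality criterion via computation sequences: if each `e_i` has
`χ(e_i) = 1` (adjunction) and `C_1 = e_{j_1}`, `C_i = C_{i-1} + e_{j_i}` with
`C_{i-1}·e_{j_i} ≥ 1`, then `χ(C_m) = m - Σ_{i=2}^m C_{i-1}·e_{j_i}`; hence
`χ(C_m) = 1` iff all these pairings equal `1`, and in any case `χ(C_m) ≤ 1`. -/
theorem stmt_13 {n : ℕ} (M : Matrix (Fin n) (Fin n) ℤ) (hsym : M.IsSymm)
    (K : Fin n → ℚ)
    (hK : ∀ i, pairQ M K (Pi.single i 1) =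
      -pairQ M (Pi.single i 1) (Pi.single i 1) - 2)
    (χ : (Fin n → ℤ) → ℚ)
    (hχ : ∀ D : Fin n → ℤ, χ D =
      -(pairQ M (fun k => (D k : ℚ)) ((fun k => (D k : ℚ)) + K)) / 2)
    (m : ℕ) (hm : 1 ≤ m) (j : ℕ → Fin n) (C : ℕ → Fin n → ℤ)
    (hC0 : C 0 = Pi.single (j 0) 1)
    (hCs : ∀ i : ℕ, i + 1 < m → C (i + 1) = C i + Pi.single (j (i + 1)) 1)
    (hstep : ∀ i : ℕ, i + 1 < m → 1 ≤ pairZ M (C i) (Pi.single (j (i + 1)) 1)) :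
    χ (C (m - 1)) =
      (m : ℚ) - ∑ i ∈ Finset.range (m - 1),
        (pairZ M (C i) (Pi.single (j (i + 1)) 1) : ℚ) ∧
    (χ (C (m - 1)) = 1 ↔
      ∀ i : ℕ, i + 1 < m → pairZ M (C i) (Pi.single (j (i + 1)) 1) = 1) ∧
    χ (C (m - 1)) ≤ 1 := by
  obtain rfl : χ = eulerChar M K := funext hχ
  set a : ℕ → ℚ := fun i => (pairZ M (C i) (Pi.single (j (i + 1)) 1) : ℚ)
  have hrange : ∀ i, i ∈ Finset.range (m - 1) ↔ i + 1 < m := fun i => by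
    rw [Finset.mem_range]; omega
  have hformula : eulerChar M K (C (m - 1)) = m - ∑ i ∈ Finset.range (m - 1), a i := by
    rw [eulerChar_computationSequence hsym hK hC0 hCs (m - 1) (by omega), Nat.cast_pred hm]
    ring
  have hcount : ∑ _i ∈ Finset.range (m - 1), (1 : ℚ) = m - 1 := by
    simp [Nat.cast_pred hm]
  have ha : ∀ i ∈ Finset.range (m - 1), 1 ≤ a i := fun i hi => by
    simp only [a]
    exact_mod_cast hstep i ((hrange i).1 hi)
  have hsum_eq_iff := Finset.sum_eq_sum_iff_of_le ha
  have hsum_le := Finset.sum_le_sum ha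
  refine ⟨hformula, ?_, by linarith⟩
  rw [hformula]
  constructor
  · intro h i hi
    have hai := hsum_eq_iff.1 (by linarith) i ((hrange i).2 hi)
    simp only [a] at hai
    exact_mod_cast hai.symm
  · intro h
    have := hsum_eq_iff.2 fun i hi => by simp [a, h i ((hrange i).1 hi)]
    linarith
end
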